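/- arXiv:1601.05740 — 2 statements merged into one kernel-verified Lean document; each statement's English description precedes it below -/
import Mathlib

section
/- For complex numbers t, s with t ≠ s̄ and neither t nor s in πℤ, one has ∑_{k∈ℤ} (sin(t−πk)/(t−πk)) · conj(sin(s−πk)/(s−πk)) = sin(t−s̄)/(t−s̄). -/
/-!
Let `e_v x = exp (i v x)` on `(-1, 1]`. Its Fourier coefficients for period `2` are
`sin (v - π k) / (v - π k)`, and `e_t * conj e_s = e_(t - s̄)`, whose mean over `(-1, 1]` is
`sin (t - s̄) / (t - s̄)`. The identity is therefore Parseval's identity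
`∑ f̂(k) conj ĝ(k) = ⟨f, g⟩` for `f = e_t`, `g = e_s`.
-/

open MeasureTheory Set Complex AddCircle
open scoped ComplexConjugate

lemma Continuous.memLp_restrict_Ioc {E : Type*} [NormedAddCommGroup E] {f : ℝ → E}
    (hf : Continuous f) (p : ENNReal) (a b : ℝ) : MemLp f p (volume.restrict (Ioc a b)) := by
  obtain ⟨C, hC⟩ := (isCompact_Icc (a := a) (b := b)).exists_bound_of_continuousOn hf.continuousOn
  refine MemLp.of_bound hf.aestronglyMeasurable C ?_
  filter_upwards [ae_restrict_mem measurableSet_Ioc] with x hx using hC x (Ioc_subset_Icc_self hx)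

theorem hasSum_fourierCoeffOn_mul_conj {a b : ℝ} (hab : a < b) {f g : ℝ → ℂ}
    (hf : MemLp f 2 (volume.restrict (Ioc a b))) (hg : MemLp g 2 (volume.restrict (Ioc a b))) :
    HasSum (fun i : ℤ => fourierCoeffOn hab f i * conj (fourierCoeffOn hab g i))
      ((b - a)⁻¹ • ∫ x in a..b, f x * conj (g x)) := by
  have := Fact.mk (sub_pos.2 hab)
  rw [← add_sub_cancel a b] at hf hg
  have hF := hf.memLp_liftIoc.haarAddCircle
  have hG := hg.memLp_liftIoc.haarAddCircle
  have repr_toLp : ∀ {h : ℝ → ℂ} (hh : MemLp (liftIoc (b - a) a h) 2 haarAddCircle) (i : ℤ),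
      fourierBasis.repr hh.toLp i = fourierCoeffOn hab h i := by
    intro h hh i
    rw [fourierBasis_repr, fourierCoeff_congr_ae hh.coeFn_toLp, fourierCoeff_liftIoc_eq]
    congr 1
    exact add_sub_cancel a b
  have inner_toLp : inner ℂ hG.toLp hF.toLp = (b - a)⁻¹ • ∫ x in a..b, f x * conj (g x) := by
    calc inner ℂ hG.toLp hF.toLp
        = ∫ z, liftIoc (b - a) a (fun x => f x * conj (g x)) z ∂haarAddCircle := by
          rw [L2.inner_def]
          refine integral_congr_ae ?_
          filter_upwards [hG.coeFn_toLp, hF.coeFn_toLp] with z hGz hFz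
          rw [hGz, hFz, RCLike.inner_apply', mul_comm]
          rfl
      _ = _ := by
          rw [integral_haarAddCircle, integral_liftIoc_eq_intervalIntegral, add_sub_cancel]
  have terms : (fun i : ℤ => fourierCoeffOn hab f i * conj (fourierCoeffOn hab g i)) =
      fun i => inner ℂ hG.toLp (fourierBasis i) * inner ℂ (fourierBasis i) hF.toLp := by
    ext i
    rw [← inner_conj_symm, ← HilbertBasis.repr_apply_apply, ← HilbertBasis.repr_apply_apply,
      repr_toLp, repr_toLp, mul_comm]
  rw [terms, ← inner_toLp]
  exact fourierBasis.hasSum_inner_mul_inner hG.toLp hF.toLp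

theorem integral_cexp_mul_I_neg_to_self {w : ℂ} (hw : w ≠ 0) (a : ℝ) :
    ∫ x in -a..a, cexp (w * x * I) = 2 * sin (w * a) / w := by
  simp_rw [mul_right_comm w _ I]
  rw [integral_exp_mul_complex (mul_ne_zero hw I_ne_zero), two_sin]
  push_cast
  field_simp
  rw [I_sq]
  ring

theorem cexp_mul_I_mul_conj (t s : ℂ) (x : ℝ) :
    cexp (t * x * I) * conj (cexp (s * x * I)) = cexp ((t - conj s) * x * I) := by
  rw [← exp_conj, ← exp_add, map_mul, map_mul, conj_ofReal, conj_I]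
  ring_nf

theorem fourierCoeffOn_cexp_mul_I {v : ℂ} {k : ℤ} (h : v ≠ Real.pi * k) :
    fourierCoeffOn (by norm_num : (-1 : ℝ) < 1) (fun x : ℝ => cexp (v * x * I)) k =
      sin (v - Real.pi * k) / (v - Real.pi * k) := by
  have exponent : ∀ x : ℝ, 2 * Real.pi * I * ((-k : ℤ) : ℂ) * x / ((1 - -1 : ℝ) : ℂ) + v * x * I =
      (v - Real.pi * k) * x * I := by
    intro x
    push_cast
    ring
  rw [fourierCoeffOn_eq_integral]
  simp_rw [fourier_coe_apply, smul_eq_mul, ← exp_add, exponent,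
    integral_cexp_mul_I_neg_to_self (sub_ne_zero.2 h) 1]
  norm_num
  ring

open Real in
theorem stmt_6 (t s : ℂ) (hts : t ≠ starRingEnd ℂ s)
    (ht : ∀ k : ℤ, t ≠ (π : ℂ) * k) (hs : ∀ k : ℤ, s ≠ (π : ℂ) * k) :
    ∑' k : ℤ, (Complex.sin (t - π * k) / (t - π * k)) *
        starRingEnd ℂ (Complex.sin (s - π * k) / (s - π * k)) =
      Complex.sin (t - starRingEnd ℂ s) / (t - starRingEnd ℂ s) := by
  have hab : (-1 : ℝ) < 1 := by norm_num
  have memLp (v : ℂ) : MemLp (fun x : ℝ => cexp (v * x * I)) 2 (volume.restrict (Ioc (-1) 1)) :=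
    (by fun_prop : Continuous fun x : ℝ => cexp (v * x * I)).memLp_restrict_Ioc 2 (-1) 1
  calc ∑' k : ℤ, (sin (t - π * k) / (t - π * k)) * conj (sin (s - π * k) / (s - π * k))
      = ∑' k : ℤ, fourierCoeffOn hab (fun x : ℝ => cexp (t * x * I)) k *
          conj (fourierCoeffOn hab (fun x : ℝ => cexp (s * x * I)) k) := by
        refine tsum_congr fun k => ?_
        rw [fourierCoeffOn_cexp_mul_I (ht k), fourierCoeffOn_cexp_mul_I (hs k)]
    _ = (1 - -1 : ℝ)⁻¹ • ∫ x in (-1 : ℝ)..1, cexp (t * x * I) * conj (cexp (s * x * I)) :=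
        (hasSum_fourierCoeffOn_mul_conj hab (memLp t) (memLp s)).tsum_eq
    _ = sin (t - conj s) / (t - conj s) := by
        simp_rw [cexp_mul_I_mul_conj, integral_cexp_mul_I_neg_to_self (sub_ne_zero.2 hts)]
        norm_num
        ring
end

section
/- Let α be an irrational multiple of 2π (i.e., α/(2π) ∉ ℚ). Then for every continuous function g : [0, 2π] → ℝ with g(0) = g(2π), the averages (1/n)·∑_{k=1}^{n} g((kα) mod 2π) converge as n → ∞ to (1/(2π))·∫₀^{2π} g(y) dy. -/
/-!
The continuous functions `f` on the circle whose averages along the orbit `k • a` converge to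
`∫ f` form a closed subspace: both the averages and the integral are 1-Lipschitz in the sup norm.
This subspace contains every character `e_m`: trivially for `m = 0`, and for `m ≠ 0` because
`e_m(a) ≠ 1` when `a` has infinite order, so the geometric sums `∑ e_m(a)^k` stay bounded.
The characters span a dense subspace, so every continuous function is equidistributed.
For irrational `α / 2π` the point `α` has infinite order in `ℝ / 2πℤ`, and `g` with
`g 0 = g 2π` descends to a continuous function on that circle.
-/

open Filter Topology MeasureTheory AddCircle

def sampleAverage {X 𝕜 : Type*} [RCLike 𝕜] (x : ℕ → X) (f : X → 𝕜) (n : ℕ) : 𝕜 :=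
  (n : 𝕜)⁻¹ * ∑ k ∈ Finset.Icc 1 n, f (x k)

section SampleAverage

variable {X 𝕜 : Type*} [RCLike 𝕜] (x : ℕ → X)

theorem sampleAverage_add (f g : X → 𝕜) (n : ℕ) :
    sampleAverage x (f + g) n = sampleAverage x f n + sampleAverage x g n := by
  simp only [sampleAverage, Pi.add_apply, Finset.sum_add_distrib, mul_add]

theorem sampleAverage_sub (f g : X → 𝕜) (n : ℕ) :
    sampleAverage x (f - g) n = sampleAverage x f n - sampleAverage x g n := by
  simp only [sampleAverage, Pi.sub_apply, Finset.sum_sub_distrib, mul_sub]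

theorem sampleAverage_smul (c : 𝕜) (f : X → 𝕜) (n : ℕ) :
    sampleAverage x (c • f) n = c * sampleAverage x f n := by
  simp only [sampleAverage, Pi.smul_apply, smul_eq_mul, ← Finset.mul_sum, mul_left_comm]

variable [TopologicalSpace X] [CompactSpace X]

theorem norm_sampleAverage_le (f : C(X, 𝕜)) (n : ℕ) : ‖sampleAverage x f n‖ ≤ ‖f‖ := by
  rcases eq_or_ne n 0 with rfl | hn
  · simp [sampleAverage]
  calc ‖sampleAverage x f n‖ ≤ (n : ℝ)⁻¹ * ∑ k ∈ Finset.Icc 1 n, ‖f‖ := by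
        rw [sampleAverage, norm_mul, norm_inv, RCLike.norm_natCast]
        gcongr
        exact norm_sum_le_of_le _ fun k _ => f.norm_coe_le_norm (x k)
    _ = ‖f‖ := by simp [hn]

theorem lipschitzWith_sampleAverage (n : ℕ) :
    LipschitzWith 1 (fun f : C(X, 𝕜) => sampleAverage x f n) :=
  LipschitzWith.of_dist_le_mul fun f g => by
    simpa [dist_eq_norm, ← sampleAverage_sub] using norm_sampleAverage_le x (f - g) n

variable [MeasurableSpace X] [OpensMeasurableSpace X] (μ : Measure X)

theorem ContinuousMap.integrable_of_compactSpace [IsFiniteMeasure μ] (f : C(X, 𝕜)) :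
    Integrable f μ :=
  f.continuous.integrable_of_hasCompactSupport (HasCompactSupport.of_compactSpace f)

theorem lipschitzWith_integral_continuousMap [IsProbabilityMeasure μ] :
    LipschitzWith 1 (fun f : C(X, 𝕜) => ∫ y, f y ∂μ) :=
  LipschitzWith.of_dist_le_mul fun f g => by
    rw [dist_eq_norm, dist_eq_norm, NNReal.coe_one, one_mul,
      ← integral_sub (f.integrable_of_compactSpace μ) (g.integrable_of_compactSpace μ)]
    simpa using norm_integral_le_of_norm_le_const (μ := μ)
      (Eventually.of_forall fun y => (f - g).norm_coe_le_norm y)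

def tendstoIntegralSubmodule [IsFiniteMeasure μ] : Submodule 𝕜 C(X, 𝕜) where
  carrier := {f | Tendsto (sampleAverage x f) atTop (𝓝 (∫ y, f y ∂μ))}
  zero_mem' := tendsto_const_nhds.congr fun n => by simp [sampleAverage]
  add_mem' {f g} hf hg := by
    simp only [Set.mem_ofPred_eq, ContinuousMap.coe_add, Pi.add_apply,
      integral_add (f.integrable_of_compactSpace μ) (g.integrable_of_compactSpace μ)]
    exact (hf.add hg).congr fun n => (sampleAverage_add x f g n).symm
  smul_mem' c f hf := by
    simp only [Set.mem_ofPred_eq, ContinuousMap.coe_smul, Pi.smul_apply, smul_eq_mul,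
      integral_const_mul]
    exact (hf.const_mul c).congr fun n => (sampleAverage_smul x c f n).symm

theorem isClosed_tendstoIntegralSubmodule [IsProbabilityMeasure μ] :
    IsClosed ((tendstoIntegralSubmodule x μ : Submodule 𝕜 C(X, 𝕜)) : Set C(X, 𝕜)) :=
  (LipschitzWith.uniformEquicontinuous _ 1 (lipschitzWith_sampleAverage x)).equicontinuous
    |>.isClosed_setOfPred_tendsto (lipschitzWith_integral_continuousMap μ).continuous

theorem tendsto_sampleAverage_of_dense_span [IsProbabilityMeasure μ] {s : Set C(X, 𝕜)}
    (hs : (Submodule.span 𝕜 s).topologicalClosure = ⊤)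
    (h : ∀ f ∈ s, Tendsto (sampleAverage x f) atTop (𝓝 (∫ y, f y ∂μ))) (f : C(X, 𝕜)) :
    Tendsto (sampleAverage x f) atTop (𝓝 (∫ y, f y ∂μ)) := by
  have hle := Submodule.topologicalClosure_minimal _ (Submodule.span_le.mpr fun f hf => h f hf)
    (isClosed_tendstoIntegralSubmodule x μ)
  rw [hs] at hle
  exact hle Submodule.mem_top

end SampleAverage

theorem tendsto_inv_mul_sum_pow_of_norm_le_one {𝕜 : Type*} [RCLike 𝕜] {z : 𝕜} (hz : ‖z‖ ≤ 1)
    (hz1 : z ≠ 1) :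
    Tendsto (fun n : ℕ => (n : 𝕜)⁻¹ * ∑ k ∈ Finset.Icc 1 n, z ^ k) atTop (𝓝 0) := by
  have hsum (n : ℕ) : ∑ k ∈ Finset.Icc 1 n, z ^ k = z * ((z ^ n - 1) / (z - 1)) := by
    rw [← geom_sum_eq hz1, Finset.mul_sum, ← Finset.Ico_add_one_right_eq_Icc,
      Finset.sum_Ico_eq_sum_range]
    simp [pow_succ', add_comm 1]
  have hbound (n : ℕ) : ‖∑ k ∈ Finset.Icc 1 n, z ^ k‖ ≤ 2 / ‖z - 1‖ := by
    rw [hsum, norm_mul, norm_div]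
    calc ‖z‖ * (‖z ^ n - 1‖ / ‖z - 1‖) ≤ 1 * ((1 + 1) / ‖z - 1‖) := by
          gcongr
          exact (norm_sub_le _ _).trans (by simp [norm_pow, pow_le_one₀ (norm_nonneg z) hz])
      _ = 2 / ‖z - 1‖ := by norm_num
  refine squeeze_zero_norm (fun n => ?_) (tendsto_const_div_atTop_nhds_zero_nat (2 / ‖z - 1‖))
  rw [norm_mul, norm_inv, RCLike.norm_natCast, inv_mul_eq_div]
  gcongr
  exact hbound n

section Fourier

variable {T : ℝ}

theorem fourier_nsmul (m : ℤ) (k : ℕ) (a : AddCircle T) : fourier m (k • a) = fourier m a ^ k := by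
  rw [fourier_apply, fourier_apply, smul_comm, toCircle_nsmul, Circle.coe_pow]

variable [hT : Fact (0 < T)]

theorem fourier_ne_one_of_addOrderOf_eq_zero {a : AddCircle T} (ha : addOrderOf a = 0) {m : ℤ}
    (hm : m ≠ 0) : fourier m a ≠ 1 := by
  rw [fourier_apply, ← Circle.coe_one, ne_eq, Circle.coe_inj, ← toCircle_zero,
    (injective_toCircle hT.out.ne').eq_iff, ← natAbs_nsmul_eq_zero]
  exact addOrderOf_eq_zero_iff'.mp ha _ (Int.natAbs_pos.mpr hm)

theorem integral_fourier_of_ne_zero {m : ℤ} (hm : m ≠ 0) :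
    ∫ x, fourier m x ∂haarAddCircle (T := T) = 0 := by
  -- Translation by half a period of `fourier m` negates it, and Haar measure is invariant.
  have h := integral_add_right_eq_self (μ := haarAddCircle (T := T)) (fourier m)
    ((T / 2 / m : ℝ) : AddCircle T)
  simp only [fourier_add_half_inv_index hm hT.out, integral_neg] at h
  linear_combination -h / 2

theorem tendsto_sampleAverage_fourier {a : AddCircle T} (ha : addOrderOf a = 0) (m : ℤ) :
    Tendsto (sampleAverage (· • a) (fourier m)) atTop
      (𝓝 (∫ x, fourier m x ∂haarAddCircle (T := T))) := by
  rcases eq_or_ne m 0 with rfl | hm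
  · have h1 : ∫ x, fourier 0 x ∂haarAddCircle (T := T) = 1 := by simp
    rw [h1]
    refine tendsto_const_nhds.congr' <| (eventually_ne_atTop 0).mono fun n hn => ?_
    simp [sampleAverage, hn]
  · rw [integral_fourier_of_ne_zero hm]
    refine (tendsto_inv_mul_sum_pow_of_norm_le_one (z := fourier m a) (Circle.norm_coe _).le
      (fourier_ne_one_of_addOrderOf_eq_zero ha hm)).congr fun n => ?_
    simp_rw [sampleAverage, fourier_nsmul]

theorem tendsto_sampleAverage_nsmul_of_addOrderOf_eq_zero {a : AddCircle T}
    (ha : addOrderOf a = 0) (f : C(AddCircle T, ℂ)) :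
    Tendsto (sampleAverage (· • a) f) atTop (𝓝 (∫ x, f x ∂haarAddCircle)) :=
  tendsto_sampleAverage_of_dense_span _ _ span_fourier_closure_eq_top
    (by rintro _ ⟨m, rfl⟩; exact tendsto_sampleAverage_fourier ha m) f

end Fourier

section Lift

variable {T : ℝ} [hT : Fact (0 < T)] {B : Type*}

theorem AddCircle.liftIco_zero_coe_apply_eq_fract (f : ℝ → B) (x : ℝ) :
    liftIco T 0 f x = f (T * Int.fract (x / T)) := by
  simp [liftIco, mul_comm]

theorem AddCircle.liftIco_zero_coe_apply_of_mem_Icc {f : ℝ → B} (hf : f 0 = f T) {x : ℝ}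
    (hx : x ∈ Set.Icc 0 T) : liftIco T 0 f x = f x := by
  rcases hx.2.lt_or_eq with h | rfl
  · exact liftIco_zero_coe_apply ⟨hx.1, h⟩
  · rw [coe_period, ← hf]
    exact liftIco_zero_coe_apply (x := 0) ⟨le_rfl, hT.out⟩

theorem AddCircle.integral_haarAddCircle_liftIco {E : Type*} [NormedAddCommGroup E]
    [NormedSpace ℝ E] {f : ℝ → E} (hf : f 0 = f T) :
    ∫ x, liftIco T 0 f x ∂haarAddCircle = T⁻¹ • ∫ y in 0..T, f y := by
  have h := AddCircle.intervalIntegral_preimage T 0 (liftIco T 0 f)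
  rw [zero_add] at h
  rw [integral_haarAddCircle, ← h, intervalIntegral.integral_congr fun x hx =>
    liftIco_zero_coe_apply_of_mem_Icc hf (by rwa [Set.uIcc_of_le hT.out.le] at hx)]

end Lift

open Real Filter in
theorem stmt_15 (α : ℝ) (hα : Irrational (α / (2 * π)))
    (g : ℝ → ℝ) (hg : ContinuousOn g (Set.Icc 0 (2 * π))) (hper : g 0 = g (2 * π)) :
    Tendsto
      (fun n : ℕ => (1 / (n:ℝ)) *
        ∑ k ∈ Finset.Icc 1 n, g (2 * π * Int.fract (k * α / (2 * π))))
      atTop (nhds ((1 / (2 * π)) * ∫ y in (0:ℝ)..(2 * π), g y)) := by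
  have : Fact (0 < 2 * π) := ⟨by positivity⟩
  have hperℂ : ((g 0 : ℝ) : ℂ) = g (2 * π) := congrArg _ hper
  let G : C(AddCircle (2 * π), ℂ) :=
    ⟨liftIco (2 * π) 0 (fun y => (g y : ℂ)),
      liftIco_zero_continuous hperℂ (Complex.continuous_ofReal.comp_continuousOn hg)⟩
  have hG := tendsto_sampleAverage_nsmul_of_addOrderOf_eq_zero
    (denseRange_zsmul_iff.mp (denseRange_zsmul_coe_iff.mpr hα)) G
  have hint : ∫ x, G x ∂haarAddCircle = ((1 / (2 * π) * ∫ y in 0..2 * π, g y : ℝ) : ℂ) := by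
    refine (integral_haarAddCircle_liftIco (f := fun y => (g y : ℂ)) hperℂ).trans ?_
    rw [intervalIntegral.integral_ofReal, Complex.real_smul]
    push_cast
    ring
  rw [← tendsto_ofReal_iff, ← hint]
  refine hG.congr fun n => ?_
  simp only [sampleAverage, one_div, Complex.ofReal_mul, Complex.ofReal_inv,
    Complex.ofReal_natCast, Complex.ofReal_sum]
  refine congrArg _ (Finset.sum_congr rfl fun k _ => ?_)
  rw [← coe_nsmul, nsmul_eq_mul]
  exact liftIco_zero_coe_apply_eq_fract (fun y => (g y : ℂ)) _
end
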